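/- Let (X_i, Y_i)_{i=1}^N be i.i.d. ∼ p(x,y), let s be bounded measurable, and let the empirical conditional uniformity be L̂ = log( (1/N²) Σ_{i,j} ((‖w_σ‖_∞ − w_σ(Y_i, Y_j))/(‖w_σ‖_∞ − Ẑ_σ(Y_i))) e^{s(X_i, X_j)} ), with Ẑ_σ(Y_i) = (1/N) Σ_j w_σ(Y_i, Y_j). If w_σ is bounded, continuous, and sup_y Z_σ(y) < ‖w_σ‖_∞, then L̂ converges almost surely as N → ∞ to log E_{(x,x^-)∼p_neg}[e^{s(x,x^-)}]. -/

import Mathlib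

/-!
Grouping the pairs `(i, j)` by the label `y = Y_i` of the anchor writes the estimator as
`∑ y, U_N(y) / (M - Ẑ_N(y))`, where `U_N(y)` is the V-statistic of the bounded kernel
`labelKernel w s M y`. As `Y` is finite, it suffices that every `Ẑ_N(y)` and every `U_N(y)`
converges almost surely: the former by the strong law of large numbers, the latter by its
analogue for V-statistics. For a bounded kernel `g` with mean `θ` and marginal means
`g₁ a = ∫ g a ·`, `g₂ b = ∫ g · b`, the Hoeffding decomposition
`g a b = θ + (g₁ a - θ) + (g₂ b - θ) + r a b` reduces that analogue to the strong law for the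
linear terms and to the convergence to `0` of the V-statistic of the degenerate kernel `r`. Its
diagonal is `O(1/N)`; off the diagonal, `r (V i) (V j)` and `r (V k) (V l)` are uncorrelated
unless `{k, l} = {i, j}`, so the normalised sum has summable second moments `O(1/N²)`.
The limit is positive since `b ↦ (M - w y b.2) / (M - Z y)` integrates to one, so `log` is
continuous there.
-/

open MeasureTheory ProbabilityTheory Filter Function Topology Finset

theorem Finset.sum_sum_eq_sum_offDiag_add_sum {ι M : Type*} [AddCommMonoid M] [DecidableEq ι]
    (s : Finset ι) (f : ι → ι → M) :
    ∑ i ∈ s, ∑ j ∈ s, f i j = ∑ p ∈ s.offDiag, f p.1 p.2 + ∑ i ∈ s, f i i := by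
  rw [← sum_product', ← diag_union_offDiag, sum_union (disjoint_diag_offDiag _), sum_diag,
    add_comm]

theorem ae_tendsto_zero_of_summable_integral_sq {Ω : Type*} [MeasurableSpace Ω] {μ : Measure Ω}
    {D : ℕ → Ω → ℝ} (hD : ∀ N, Integrable (fun ω => D N ω ^ 2) μ)
    (hsum : Summable fun N => ∫ ω, D N ω ^ 2 ∂μ) :
    ∀ᵐ ω ∂μ, Tendsto (fun N => D N ω) atTop (𝓝 0) := by
  have hmeas : ∀ N, AEMeasurable (fun ω => ENNReal.ofReal (D N ω ^ 2)) μ :=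
    fun N => (hD N).aemeasurable.ennreal_ofReal
  have hfin : ∫⁻ ω, ∑' N, ENNReal.ofReal (D N ω ^ 2) ∂μ ≠ ⊤ := by
    rw [lintegral_tsum hmeas]
    simp_rw [← ofReal_integral_eq_lintegral_ofReal (hD _) (ae_of_all _ fun ω => sq_nonneg _)]
    rw [← ENNReal.ofReal_tsum_of_nonneg (fun N => integral_nonneg fun ω => sq_nonneg _) hsum]
    exact ENNReal.ofReal_ne_top
  filter_upwards [ae_lt_top' (AEMeasurable.tsum hmeas) hfin] with ω hω
  have hsq : Tendsto (fun N => D N ω ^ 2) atTop (𝓝 0) := by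
    simpa [Function.comp_def, ENNReal.toReal_ofReal (sq_nonneg _)] using
      (ENNReal.tendsto_toReal ENNReal.zero_ne_top).comp
        (ENNReal.tendsto_atTop_zero_of_tsum_ne_top hω.ne)
  rw [tendsto_zero_iff_abs_tendsto_zero]
  simpa [Function.comp_def, Real.sqrt_sq_eq_abs] using hsq.sqrt

noncomputable def vStat {E : Type*} (g : E → E → ℝ) (x : ℕ → E) (N : ℕ) : ℝ :=
  1 / (N : ℝ) ^ 2 * ∑ i ∈ range N, ∑ j ∈ range N, g (x i) (x j)

section Hoeffding

variable {E : Type*} [MeasurableSpace E] (ν : Measure E) (g : E → E → ℝ)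

noncomputable def hoeffdingRemainder (a b : E) : ℝ :=
  g a b - ∫ y, g a y ∂ν - ∫ x, g x b ∂ν + ∫ p, g p.1 p.2 ∂ν.prod ν

theorem vStat_eq_vStat_hoeffdingRemainder_add (x : ℕ → E) {N : ℕ} (hN : N ≠ 0) :
    vStat g x N = vStat (hoeffdingRemainder ν g) x N
      + (∑ i ∈ range N, ∫ y, g (x i) y ∂ν) / N
      + (∑ j ∈ range N, ∫ y, g y (x j) ∂ν) / N - ∫ p, g p.1 p.2 ∂ν.prod ν := by
  simp only [vStat, hoeffdingRemainder, sum_add_distrib, sum_sub_distrib, sum_const, card_range,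
    nsmul_eq_mul, ← mul_sum]
  field_simp
  ring

variable {ν g}

theorem measurable_hoeffdingRemainder [SFinite ν] (hg : Measurable (uncurry g)) :
    Measurable (uncurry (hoeffdingRemainder ν g)) := by
  change Measurable fun p : E × E => g p.1 p.2 - ∫ y, g p.1 y ∂ν - ∫ x, g x p.2 ∂ν + _
  exact ((hg.sub (hg.stronglyMeasurable.integral_prod_right.measurable.comp measurable_fst)).sub
      (hg.stronglyMeasurable.integral_prod_left.measurable.comp measurable_snd)).add_const _

variable [IsProbabilityMeasure ν] {C : ℝ} (hgC : ∀ a b, ‖g a b‖ ≤ C)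
include hgC

theorem norm_hoeffdingRemainder_le (a b : E) : ‖hoeffdingRemainder ν g a b‖ ≤ 4 * C := by
  have h1 : ‖∫ y, g a y ∂ν‖ ≤ C := by
    simpa using norm_integral_le_of_norm_le_const (μ := ν) (ae_of_all _ fun y => hgC a y)
  have h2 : ‖∫ x, g x b ∂ν‖ ≤ C := by
    simpa using norm_integral_le_of_norm_le_const (μ := ν) (ae_of_all _ fun x => hgC x b)
  have h3 : ‖∫ p, g p.1 p.2 ∂ν.prod ν‖ ≤ C := by
    simpa using
      norm_integral_le_of_norm_le_const (μ := ν.prod ν) (ae_of_all _ fun p => hgC p.1 p.2)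
  have h0 := hgC a b
  simp only [hoeffdingRemainder, Real.norm_eq_abs, abs_le] at *
  constructor <;> linarith

variable (hg : Measurable (uncurry g))
include hg

theorem integral_hoeffdingRemainder_right (a : E) :
    ∫ y, hoeffdingRemainder ν g a y ∂ν = 0 := by
  have hg' : Integrable (uncurry g) (ν.prod ν) :=
    Integrable.of_bound hg.aestronglyMeasurable C (ae_of_all _ fun p => hgC p.1 p.2)
  have hθ : ∫ y, ∫ x, g x y ∂ν ∂ν = ∫ p, g p.1 p.2 ∂ν.prod ν :=
    (integral_integral_swap hg').symm.trans (integral_prod _ hg').symm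
  have hga : Integrable (fun y => g a y) ν := Integrable.of_bound
    (hg.comp measurable_prodMk_left).aestronglyMeasurable C (ae_of_all _ fun y => hgC a y)
  simp only [hoeffdingRemainder]
  rw [integral_add, integral_sub, integral_sub hga (integrable_const _), hθ]
  · simp
  · exact hga.sub (integrable_const _)
  · exact hg'.integral_prod_right
  · exact (hga.sub (integrable_const _)).sub hg'.integral_prod_right
  · exact integrable_const _

theorem integral_hoeffdingRemainder_left (b : E) :
    ∫ x, hoeffdingRemainder ν g x b ∂ν = 0 := by
  have hg' : Integrable (uncurry g) (ν.prod ν) :=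
    Integrable.of_bound hg.aestronglyMeasurable C (ae_of_all _ fun p => hgC p.1 p.2)
  have hθ : ∫ x, ∫ y, g x y ∂ν ∂ν = ∫ p, g p.1 p.2 ∂ν.prod ν :=
    (integral_prod _ hg').symm
  have hgb : Integrable (fun x => g x b) ν := Integrable.of_bound
    (hg.comp measurable_prodMk_right).aestronglyMeasurable C (ae_of_all _ fun x => hgC x b)
  simp only [hoeffdingRemainder]
  rw [integral_add, integral_sub, integral_sub hgb, hθ]
  · simp
  · exact hg'.integral_prod_left
  · exact hgb.sub hg'.integral_prod_left
  · exact integrable_const _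
  · exact (hgb.sub hg'.integral_prod_left).sub (integrable_const _)
  · exact integrable_const _

end Hoeffding

section IndependentSequence

variable {Ω E : Type*} [MeasurableSpace Ω] [MeasurableSpace E] {μ : Measure Ω}

theorem integral_comp_eq_zero_of_indepFun [IsFiniteMeasure μ] {F : Type*} [MeasurableSpace F]
    {W : Ω → F} {U : Ω → E} (hW : AEMeasurable W μ) (hU : AEMeasurable U μ)
    (hWU : IndepFun W U μ) {φ : F → E → ℝ}
    (hφ : Integrable (uncurry φ) ((μ.map W).prod (μ.map U)))
    (hφ0 : ∀ x, ∫ y, φ x y ∂(μ.map U) = 0) :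
    ∫ ω, φ (W ω) (U ω) ∂μ = 0 := by
  rw [indepFun_iff_map_prod_eq_prod_map_map hW hU] at hWU
  calc ∫ ω, φ (W ω) (U ω) ∂μ = ∫ p, uncurry φ p ∂((μ.map W).prod (μ.map U)) := by
        rw [← hWU, integral_map (hW.prodMk hU) (hWU ▸ hφ.aestronglyMeasurable)]
        rfl
    _ = 0 := by simp [integral_prod _ hφ, hφ0]

variable {V : ℕ → Ω → E}

theorem ae_tendsto_average (hVi : iIndepFun V μ) (hVid : ∀ i, IdentDistrib (V i) (V 0) μ μ)
    {φ : E → ℝ} (hφm : Measurable φ) (hφ : Integrable φ (μ.map (V 0))) :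
    ∀ᵐ ω ∂μ, Tendsto (fun N : ℕ => (∑ i ∈ range N, φ (V i ω)) / N) atTop
      (𝓝 (∫ x, φ x ∂μ.map (V 0))) := by
  rw [integral_map (hVid 0).aemeasurable_fst hφ.aestronglyMeasurable]
  exact strong_law_ae_real (fun i ω => φ (V i ω))
    (hφ.comp_aemeasurable (hVid 0).aemeasurable_fst)
    (fun i j hij => (hVi.indepFun hij).comp hφm hφm) (fun i => (hVid i).comp hφm)

theorem integral_mul_eq_zero_of_notMem [IsProbabilityMeasure μ] (hVm : ∀ i, Measurable (V i))
    (hVi : iIndepFun V μ) (hVid : ∀ i, IdentDistrib (V i) (V 0) μ μ) {ρ σ : E → E → ℝ}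
    (hρ : Measurable (uncurry ρ)) (hσ : Measurable (uncurry σ)) {C D : ℝ}
    (hρC : ∀ a b, ‖ρ a b‖ ≤ C) (hσD : ∀ a b, ‖σ a b‖ ≤ D)
    (hσ0 : ∀ x, ∫ y, σ x y ∂(μ.map (V 0)) = 0) {i j k l : ℕ}
    (hl : l ∉ ({i, j, k} : Finset ℕ)) :
    ∫ ω, ρ (V i ω) (V j ω) * σ (V k ω) (V l ω) ∂μ = 0 := by
  set S : Finset ℕ := {i, j, k}
  have hind : IndepFun (fun ω (m : S) => V m ω) (V l) μ :=
    (hVi.indepFun_finset S {l} (disjoint_singleton_right.2 hl) hVm).comp measurable_id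
      (measurable_pi_apply (⟨l, mem_singleton_self l⟩ : ({l} : Finset ℕ)))
  have hi : i ∈ S := by simp [S]
  have hj : j ∈ S := by simp [S]
  have hk : k ∈ S := by simp [S]
  let φ : (S → E) → E → ℝ :=
    fun f y => ρ (f ⟨i, hi⟩) (f ⟨j, hj⟩) * σ (f ⟨k, hk⟩) y
  have hφm : Measurable (uncurry φ) := Measurable.mul
    (hρ.comp (f := fun p : (S → E) × E => (p.1 ⟨i, hi⟩, p.1 ⟨j, hj⟩)) (by fun_prop))
    (hσ.comp (f := fun p : (S → E) × E => (p.1 ⟨k, hk⟩, p.2)) (by fun_prop))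
  have hφC : ∀ p, ‖uncurry φ p‖ ≤ C * D := fun ⟨f, y⟩ => by
    simp only [uncurry_apply_pair, φ, norm_mul]
    exact mul_le_mul (hρC _ _) (hσD _ _) (norm_nonneg _) ((norm_nonneg _).trans (hρC y y))
  refine integral_comp_eq_zero_of_indepFun
    (measurable_pi_lambda (fun ω (m : S) => V m ω) fun m => hVm m).aemeasurable
    (hVm l).aemeasurable hind (Integrable.of_bound hφm.aestronglyMeasurable _
      (ae_of_all _ hφC)) fun f => ?_
  simp only [φ, integral_const_mul, (hVid l).map_eq, hσ0, mul_zero]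

variable [IsProbabilityMeasure μ] (hVm : ∀ i, Measurable (V i)) (hVi : iIndepFun V μ)
  (hVid : ∀ i, IdentDistrib (V i) (V 0) μ μ) {r : E → E → ℝ} (hr : Measurable (uncurry r))
  {C : ℝ} (hrC : ∀ a b, ‖r a b‖ ≤ C)
  (hr_right : ∀ x, ∫ y, r x y ∂(μ.map (V 0)) = 0)
  (hr_left : ∀ y, ∫ x, r x y ∂(μ.map (V 0)) = 0)
include hVm hVi hVid hr hrC hr_right hr_left

theorem integral_mul_eq_zero_of_ne_of_ne_swap {p q : ℕ × ℕ} (hp : p.1 ≠ p.2)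
    (hq : q.1 ≠ q.2) (hqp : q ≠ p) (hqp' : q ≠ p.swap) :
    ∫ ω, r (V p.1 ω) (V p.2 ω) * r (V q.1 ω) (V q.2 ω) ∂μ = 0 := by
  -- Some index of `q` occurs only once among the four; integrate `r` in that variable.
  by_cases h : q.2 ∈ ({p.1, p.2, q.1} : Finset ℕ)
  · have h' : q.1 ∉ ({p.1, p.2, q.2} : Finset ℕ) := by
      obtain ⟨p1, p2⟩ := p; obtain ⟨q1, q2⟩ := q
      simp only [mem_insert, mem_singleton, ne_eq, Prod.mk.injEq, Prod.swap_prod_mk] at *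
      omega
    exact integral_mul_eq_zero_of_notMem (σ := swap r) hVm hVi hVid hr
      (hr.comp measurable_swap) hrC (fun a b => hrC b a) hr_left h'
  · exact integral_mul_eq_zero_of_notMem hVm hVi hVid hr hr hrC hrC hr_right h

theorem integral_sq_sum_offDiag_le (N : ℕ) :
    ∫ ω, (∑ p ∈ (range N).offDiag, r (V p.1 ω) (V p.2 ω)) ^ 2 ∂μ
      ≤ 2 * C ^ 2 * N ^ 2 := by
  set A := (range N).offDiag
  set R : ℕ × ℕ → ℕ × ℕ → Ω → ℝ :=
    fun p q ω => r (V p.1 ω) (V p.2 ω) * r (V q.1 ω) (V q.2 ω)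
  have hRC : ∀ p q ω, ‖R p q ω‖ ≤ C ^ 2 := fun p q ω => by
    rw [norm_mul, sq]
    exact mul_le_mul (hrC _ _) (hrC _ _) (norm_nonneg _)
      ((norm_nonneg _).trans (hrC (V p.1 ω) (V p.2 ω)))
  have hR : ∀ p q, Integrable (R p q) μ := fun p q =>
    Integrable.of_bound ((hr.comp ((hVm p.1).prodMk (hVm p.2))).mul
      (hr.comp ((hVm q.1).prodMk (hVm q.2)))).aestronglyMeasurable _ (ae_of_all _ (hRC p q))
  have hrow : ∀ p ∈ A, ∑ q ∈ A, ∫ ω, R p q ω ∂μ ≤ 2 * C ^ 2 := by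
    intro p hpA
    obtain ⟨hp1, hp2, hp⟩ := mem_offDiag.1 hpA
    have hsub : {p, p.swap} ⊆ A := by
      rw [mem_range] at hp1 hp2
      simp [insert_subset_iff, A, hp1, hp2, hp, Ne.symm hp]
    rw [← sum_subset hsub fun q hq hqp => by
      simp only [mem_insert, mem_singleton, not_or] at hqp
      exact integral_mul_eq_zero_of_ne_of_ne_swap hVm hVi hVid hr hrC hr_right hr_left hp
        (mem_offDiag.1 hq).2.2 hqp.1 hqp.2]
    calc ∑ q ∈ {p, p.swap}, ∫ ω, R p q ω ∂μ
        ≤ ({p, p.swap} : Finset _).card • C ^ 2 :=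
          sum_le_card_nsmul _ _ _ fun q _ => (le_abs_self _).trans <| by
            simpa using norm_integral_le_of_norm_le_const (ae_of_all μ (hRC p q))
      _ ≤ 2 * C ^ 2 := by
          rw [nsmul_eq_mul]
          gcongr
          exact_mod_cast card_le_two
  calc ∫ ω, (∑ p ∈ A, r (V p.1 ω) (V p.2 ω)) ^ 2 ∂μ
        = ∑ p ∈ A, ∑ q ∈ A, ∫ ω, R p q ω ∂μ := by
        simp_rw [sq, sum_mul_sum]
        rw [integral_finsetSum _ fun p _ => integrable_finsetSum _ fun q _ => hR p q]
        exact sum_congr rfl fun p _ => integral_finsetSum _ fun q _ => hR p q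
    _ ≤ ∑ p ∈ A, 2 * C ^ 2 := sum_le_sum hrow
    _ ≤ 2 * C ^ 2 * N ^ 2 := by
        rw [sum_const, nsmul_eq_mul, mul_comm]
        gcongr
        exact_mod_cast (offDiag_card _).trans_le ((Nat.sub_le _ _).trans (by simp [sq]))

theorem ae_tendsto_vStat_zero_of_degenerate :
    ∀ᵐ ω ∂μ, Tendsto (vStat r (V · ω)) atTop (𝓝 0) := by
  set S : ℕ → Ω → ℝ := fun N ω => ∑ p ∈ (range N).offDiag, r (V p.1 ω) (V p.2 ω)
  have hS : ∀ N, MemLp (S N) 2 μ := fun N => memLp_finsetSum _ fun p _ =>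
    MemLp.of_bound (hr.comp ((hVm p.1).prodMk (hVm p.2))).aestronglyMeasurable C
      (ae_of_all _ fun ω => hrC _ _)
  have hS2 : ∀ N : ℕ,
      ∫ ω, (1 / (N : ℝ) ^ 2 * S N ω) ^ 2 ∂μ ≤ 2 * C ^ 2 * (1 / (N : ℝ) ^ 2) := by
    intro N
    rcases eq_or_ne N 0 with rfl | hN
    · simp
    simp_rw [mul_pow, integral_const_mul]
    calc _ ≤ (1 / (N : ℝ) ^ 2) ^ 2 * (2 * C ^ 2 * N ^ 2) := by
          gcongr
          exact integral_sq_sum_offDiag_le hVm hVi hVid hr hrC hr_right hr_left N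
      _ = 2 * C ^ 2 * (1 / (N : ℝ) ^ 2) := by field_simp
  have hoff : ∀ᵐ ω ∂μ, Tendsto (fun N : ℕ => 1 / (N : ℝ) ^ 2 * S N ω) atTop (𝓝 0) :=
    ae_tendsto_zero_of_summable_integral_sq (fun N => ((hS N).const_mul _).integrable_sq)
      (((Real.summable_one_div_nat_pow.2 one_lt_two).mul_left (2 * C ^ 2)).of_nonneg_of_le
        (fun N => integral_nonneg fun ω => sq_nonneg _) hS2)
  have hdiag : ∀ ω,
      Tendsto (fun N : ℕ => 1 / (N : ℝ) ^ 2 * ∑ i ∈ range N, r (V i ω) (V i ω)) atTop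
        (𝓝 0) := by
    intro ω
    refine squeeze_zero_norm (fun N => ?_) (tendsto_const_div_atTop_nhds_zero_nat C)
    rcases eq_or_ne N 0 with rfl | hN
    · simp
    calc ‖1 / (N : ℝ) ^ 2 * ∑ i ∈ range N, r (V i ω) (V i ω)‖
        ≤ 1 / (N : ℝ) ^ 2 * ∑ i ∈ range N, C := by
          rw [norm_mul, Real.norm_of_nonneg (by positivity)]
          gcongr
          exact norm_sum_le_of_le _ fun i _ => hrC _ _
      _ = C / N := by
          rw [sum_const, card_range, nsmul_eq_mul]
          field_simp
  filter_upwards [hoff] with ω hω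
  have := hω.add (hdiag ω)
  rw [zero_add] at this
  refine this.congr fun N => ?_
  rw [vStat, Finset.sum_sum_eq_sum_offDiag_add_sum, mul_add]

end IndependentSequence

theorem ae_tendsto_vStat {Ω E : Type*} [MeasurableSpace Ω] [MeasurableSpace E] {μ : Measure Ω}
    [IsProbabilityMeasure μ] {V : ℕ → Ω → E} (hVm : ∀ i, Measurable (V i))
    (hVi : iIndepFun V μ) (hVid : ∀ i, IdentDistrib (V i) (V 0) μ μ) {g : E → E → ℝ}
    (hg : Measurable (uncurry g)) {C : ℝ} (hgC : ∀ a b, ‖g a b‖ ≤ C) :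
    ∀ᵐ ω ∂μ, Tendsto (vStat g (V · ω)) atTop
      (𝓝 (∫ p, g p.1 p.2 ∂(μ.map (V 0)).prod (μ.map (V 0)))) := by
  set ν := μ.map (V 0)
  have : IsProbabilityMeasure ν := Measure.isProbabilityMeasure_map (hVm 0).aemeasurable
  have hg' : Integrable (uncurry g) (ν.prod ν) :=
    Integrable.of_bound hg.aestronglyMeasurable C (ae_of_all _ fun p => hgC p.1 p.2)
  have hr := ae_tendsto_vStat_zero_of_degenerate hVm hVi hVid
    (measurable_hoeffdingRemainder hg) (norm_hoeffdingRemainder_le hgC)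
    (integral_hoeffdingRemainder_right hgC hg)
    (integral_hoeffdingRemainder_left hgC hg)
  have h1 := ae_tendsto_average hVi hVid hg.stronglyMeasurable.integral_prod_right.measurable
    hg'.integral_prod_left
  have h2 := ae_tendsto_average hVi hVid hg.stronglyMeasurable.integral_prod_left.measurable
    hg'.integral_prod_right
  have hθ₁ : ∫ x, ∫ y, g x y ∂ν ∂ν = ∫ p, g p.1 p.2 ∂ν.prod ν :=
    (integral_prod _ hg').symm
  have hθ₂ : ∫ y, ∫ x, g x y ∂ν ∂ν = ∫ p, g p.1 p.2 ∂ν.prod ν :=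
    (integral_integral_swap hg').symm.trans hθ₁
  rw [hθ₁] at h1
  rw [hθ₂] at h2
  filter_upwards [hr, h1, h2] with ω hr h1 h2
  have := ((hr.add h1).add h2).sub (tendsto_const_nhds (x := ∫ p, g p.1 p.2 ∂ν.prod ν))
  rw [zero_add, add_sub_cancel_right] at this
  exact this.congr' ((eventually_ne_atTop 0).mono fun N hN =>
    (vStat_eq_vStat_hoeffdingRemainder_add ν g _ hN).symm)

section LabelKernel

variable {X Y : Type*} (w : Y → Y → ℝ) (s : X → X → ℝ) (M : ℝ)

open Classical in
noncomputable def labelKernel (y : Y) (a b : X × Y) : ℝ :=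
  if a.2 = y then (M - w y b.2) * Real.exp (s a.1 b.1) else 0

variable {w s M}

theorem measurable_labelKernel [MeasurableSpace X] [MeasurableSpace Y] [Countable Y]
    [MeasurableSingletonClass Y] (hs : Measurable (uncurry s)) (y : Y) :
    Measurable (uncurry (labelKernel w s M y)) :=
  Measurable.ite (measurable_fst.snd (measurableSet_singleton y))
    ((measurable_const.sub ((measurable_of_countable (w y)).comp measurable_snd.snd)).mul
      (Real.measurable_exp.comp (hs.comp (measurable_fst.fst.prodMk measurable_snd.fst))))
    measurable_const

theorem norm_labelKernel_le {K B : ℝ} (hw : ∀ y y', |M - w y y'| ≤ K)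
    (hs : ∀ x x', |s x x'| ≤ B) (y : Y) (a b : X × Y) :
    ‖labelKernel w s M y a b‖ ≤ K * Real.exp B := by
  unfold labelKernel
  split_ifs
  · rw [norm_mul, Real.norm_eq_abs, Real.norm_of_nonneg (Real.exp_nonneg _)]
    exact mul_le_mul (hw y b.2) (Real.exp_le_exp.2 ((le_abs_self _).trans (hs _ _)))
      (Real.exp_nonneg _) ((abs_nonneg _).trans (hw y b.2))
  · simpa using mul_nonneg ((abs_nonneg _).trans (hw y b.2)) (Real.exp_nonneg B)

theorem sum_labelKernel_mul_inv [Fintype Y] (t : Y → ℝ) (a b : X × Y) :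
    ∑ y, labelKernel w s M y a b * (M - t y)⁻¹ =
      (M - w a.2 b.2) / (M - t a.2) * Real.exp (s a.1 b.1) := by
  rw [sum_eq_single_of_mem a.2 (mem_univ _) fun y _ hy => by simp [labelKernel, Ne.symm hy]]
  rw [labelKernel, if_pos rfl, div_eq_mul_inv]
  ring

theorem sum_vStat_labelKernel_mul_inv [Fintype Y] (t : Y → ℝ) (x : ℕ → X × Y) (N : ℕ) :
    ∑ y, vStat (labelKernel w s M y) x N * (M - t y)⁻¹ =
      1 / (N : ℝ) ^ 2 * ∑ i ∈ range N, ∑ j ∈ range N,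
        (M - w (x i).2 (x j).2) / (M - t (x i).2) * Real.exp (s (x i).1 (x j).1) := by
  simp_rw [← sum_labelKernel_mul_inv t, vStat, mul_sum, sum_mul]
  rw [sum_comm]
  refine sum_congr rfl fun i _ => ?_
  rw [sum_comm]
  refine sum_congr rfl fun j _ => sum_congr rfl fun y _ => by ring

theorem sum_integral_labelKernel_mul_inv [Fintype Y] [MeasurableSpace X] [MeasurableSpace Y]
    {π : Measure ((X × Y) × (X × Y))}
    (hint : ∀ y, Integrable (uncurry (labelKernel w s M y)) π) (t : Y → ℝ) :
    ∑ y, (∫ p, labelKernel w s M y p.1 p.2 ∂π) * (M - t y)⁻¹ =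
      ∫ p, (M - w p.1.2 p.2.2) / (M - t p.1.2) * Real.exp (s p.1.1 p.2.1) ∂π := by
  simp_rw [← integral_mul_const, ← sum_labelKernel_mul_inv t]
  exact (integral_finsetSum _ fun y _ => (hint y).mul_const _).symm

theorem integrable_labelKernel [MeasurableSpace X] [MeasurableSpace Y] [Countable Y]
    [MeasurableSingletonClass Y] {π : Measure ((X × Y) × (X × Y))} [IsFiniteMeasure π]
    (hs : Measurable (uncurry s)) {K B : ℝ} (hw : ∀ y y', |M - w y y'| ≤ K)
    (hsB : ∀ x x', |s x x'| ≤ B) (y : Y) :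
    Integrable (uncurry (labelKernel w s M y)) π :=
  Integrable.of_bound (measurable_labelKernel hs y).aestronglyMeasurable _
    (ae_of_all _ fun p => norm_labelKernel_le hw hsB y p.1 p.2)

theorem integral_sub_div_sub_eq_one [MeasurableSpace X] [MeasurableSpace Y] [Finite Y]
    [MeasurableSingletonClass Y] {ρ : Measure (X × Y)} [IsProbabilityMeasure ρ] {Z : Y → ℝ}
    {y : Y} (hZ : Z y = ∫ b, w y b.2 ∂ρ) (hZM : Z y ≠ M) :
    ∫ b, (M - w y b.2) / (M - Z y) ∂ρ = 1 := by
  have hw : Integrable (fun b : X × Y => w y b.2) ρ :=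
    Integrable.of_finite.comp_measurable measurable_snd
  rw [integral_div, integral_sub (integrable_const M) hw, ← hZ]
  simpa using div_self (sub_ne_zero.2 hZM.symm)

theorem integral_sub_div_sub_mul_exp_pos [MeasurableSpace X] [MeasurableSpace Y] [Finite Y]
    [MeasurableSingletonClass Y] {ρ : Measure (X × Y)} [IsProbabilityMeasure ρ] {Z : Y → ℝ}
    (hs : Measurable (uncurry s)) {B : ℝ} (hsB : ∀ x x', |s x x'| ≤ B)
    (hwM : ∀ y y', w y y' ≤ M) (hZ : ∀ y, Z y = ∫ b, w y b.2 ∂ρ) (hZM : ∀ y, Z y < M) :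
    0 < ∫ q, (M - w q.1.2 q.2.2) / (M - Z q.1.2) * Real.exp (s q.1.1 q.2.1) ∂ρ.prod ρ := by
  have hu : Integrable (fun q : (X × Y) × (X × Y) => (M - w q.1.2 q.2.2) / (M - Z q.1.2))
      (ρ.prod ρ) :=
    (Integrable.of_finite (f := fun l : Y × Y => (M - w l.1 l.2) / (M - Z l.1))
      ).comp_measurable (measurable_fst.snd.prodMk measurable_snd.snd)
  have hu1 : ∫ q, (M - w q.1.2 q.2.2) / (M - Z q.1.2) ∂ρ.prod ρ = 1 := by
    rw [integral_prod _ hu]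
    simp [integral_sub_div_sub_eq_one (hZ _) (hZM _).ne]
  have hexp : Measurable fun q : (X × Y) × (X × Y) => Real.exp (s q.1.1 q.2.1) :=
    Real.measurable_exp.comp (hs.comp (measurable_fst.fst.prodMk measurable_snd.fst))
  have hf := hu.mul_bdd hexp.aestronglyMeasurable (ae_of_all _ fun q => by
    rw [Real.norm_of_nonneg (Real.exp_nonneg _)]
    exact Real.exp_le_exp.2 ((le_abs_self _).trans (hsB _ _)))
  calc 0 < Real.exp (-B) := Real.exp_pos _
    _ = ∫ q, Real.exp (-B) * ((M - w q.1.2 q.2.2) / (M - Z q.1.2)) ∂ρ.prod ρ := by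
        rw [integral_const_mul, hu1, mul_one]
    _ ≤ _ := integral_mono (hu.const_mul _) hf fun q => by
        rw [mul_comm]
        exact mul_le_mul_of_nonneg_left (Real.exp_le_exp.2 (neg_le_of_abs_le (hsB _ _)))
          (div_nonneg (sub_nonneg.2 (hwM _ _)) (sub_nonneg.2 (hZM _).le))

end LabelKernel

theorem empirical_conditional_uniformity_tendsto_general
    {Ω X Y : Type*} [MeasurableSpace Ω] [MeasurableSpace X]
    [MeasurableSpace Y] [Fintype Y] [MeasurableSingletonClass Y]
    (μ : Measure Ω) [IsProbabilityMeasure μ]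
    (V : ℕ → Ω → X × Y)                                -- (X_i, Y_i)
    (hV_meas : ∀ i, Measurable (V i))
    (hV_indep : iIndepFun V μ)
    (hV_ident : ∀ i, IdentDistrib (V i) (V 0) μ μ)
    (s : X → X → ℝ)
    (hs_meas : Measurable (Function.uncurry s))
    (B : ℝ) (hs_bdd : ∀ x x', |s x x'| ≤ B)
    (w : Y → Y → ℝ)
    (M : ℝ)                                            -- M = ‖w_σ‖_∞
    (hM : IsLUB (Set.range fun q : Y × Y => w q.1 q.2) M)
    (Z : Y → ℝ)
    (hZ : ∀ y, Z y = ∫ ω, w y (V 0 ω).2 ∂μ)           -- Z_σ(y) = E[w_σ(y, Y₁)]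
    (hZ_lt : ∀ y, Z y < M)
    (ρ : Measure (X × Y)) (hρ : ρ = μ.map (V 0)) :     -- law of (X₁, Y₁)
    ∀ᵐ ω ∂μ, Tendsto
      (fun N : ℕ =>
        Real.log ((1 / (N : ℝ) ^ 2) *
          ∑ i ∈ Finset.range N, ∑ j ∈ Finset.range N,
            ((M - w (V i ω).2 (V j ω).2) /
              (M - (1 / (N : ℝ)) * ∑ j' ∈ Finset.range N, w (V i ω).2 (V j' ω).2)) *
            Real.exp (s (V i ω).1 (V j ω).1)))
      atTop
      (nhds (Real.log (∫ q : (X × Y) × (X × Y),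
        ((M - w q.1.2 q.2.2) / (M - Z q.1.2)) * Real.exp (s q.1.1 q.2.1)
        ∂(ρ.prod ρ)))) := by
  subst hρ
  have : IsProbabilityMeasure (μ.map (V 0)) :=
    Measure.isProbabilityMeasure_map (hV_meas 0).aemeasurable
  obtain ⟨K, hK⟩ := Finite.exists_le fun q : Y × Y => |M - w q.1 q.2|
  have hwK : ∀ y y', |M - w y y'| ≤ K := fun y y' => hK (y, y')
  have hwy : ∀ y, Measurable fun b : X × Y => w y b.2 :=
    fun y => (measurable_of_countable (w y)).comp measurable_snd
  have hZρ : ∀ y, Z y = ∫ b, w y b.2 ∂μ.map (V 0) := fun y => by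
    rw [hZ, integral_map (hV_meas 0).aemeasurable (hwy y).aestronglyMeasurable]
  have hU : ∀ᵐ ω ∂μ, ∀ y, Tendsto (vStat (labelKernel w s M y) (V · ω)) atTop
      (𝓝 (∫ p, labelKernel w s M y p.1 p.2 ∂(μ.map (V 0)).prod (μ.map (V 0)))) :=
    ae_all_iff.2 fun y => ae_tendsto_vStat hV_meas hV_indep hV_ident
      (measurable_labelKernel hs_meas y) (norm_labelKernel_le hwK hs_bdd y)
  have hA : ∀ᵐ ω ∂μ, ∀ y,
      Tendsto (fun N : ℕ => 1 / (N : ℝ) * ∑ j ∈ range N, w y (V j ω).2) atTop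
        (𝓝 (Z y)) := by
    refine ae_all_iff.2 fun y => ?_
    simpa only [← hZρ, one_div_mul_eq_div] using ae_tendsto_average hV_indep hV_ident (hwy y)
      (Integrable.of_finite.comp_measurable measurable_snd)
  filter_upwards [hU, hA] with ω hU hA
  have hlim := tendsto_finsetSum univ fun y _ =>
    (hU y).mul ((tendsto_const_nhds.sub (hA y)).inv₀ (sub_ne_zero.2 (hZ_lt y).ne'))
  rw [sum_integral_labelKernel_mul_inv (integrable_labelKernel hs_meas hwK hs_bdd)] at hlim
  have hpos := integral_sub_div_sub_mul_exp_pos hs_meas hs_bdd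
    (fun y y' => hM.1 ⟨(y, y'), rfl⟩) hZρ hZ_lt
  refine ((Real.continuousAt_log hpos.ne').tendsto.comp hlim).congr fun N => ?_
  simp only [comp_apply, sum_vStat_labelKernel_mul_inv]

/-- almost-sure convergence of the empirical conditional uniformity estimator
to the population conditional uniformity loss (labels in a finite space). -/
theorem empirical_conditional_uniformity_tendsto
    {Ω X Y : Type*} [MeasurableSpace Ω] [MeasurableSpace X]
    [MeasurableSpace Y] [Fintype Y] [MeasurableSingletonClass Y]
    (μ : Measure Ω) [IsProbabilityMeasure μ]
    (V : ℕ → Ω → X × Y)                                -- (X_i, Y_i)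
    (hV_meas : ∀ i, Measurable (V i))
    (hV_indep : iIndepFun V μ)
    (hV_ident : ∀ i, IdentDistrib (V i) (V 0) μ μ)
    (s : X → X → ℝ)
    (hs_meas : Measurable (Function.uncurry s))
    (B : ℝ) (hs_bdd : ∀ x x', |s x x'| ≤ B)
    (w : Y → Y → ℝ)
    (hw_nonneg : ∀ y y', 0 ≤ w y y')
    (M : ℝ)                                            -- M = ‖w_σ‖_∞
    (hM : IsLUB (Set.range fun q : Y × Y => w q.1 q.2) M)
    (Z : Y → ℝ)
    (hZ : ∀ y, Z y = ∫ ω, w y (V 0 ω).2 ∂μ)           -- Z_σ(y) = E[w_σ(y, Y₁)]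
    (hZ_lt : ∀ y, Z y < M)
    (ρ : Measure (X × Y)) (hρ : ρ = μ.map (V 0)) :     -- law of (X₁, Y₁)
    ∀ᵐ ω ∂μ, Tendsto
      (fun N : ℕ =>
        Real.log ((1 / (N : ℝ) ^ 2) *
          ∑ i ∈ Finset.range N, ∑ j ∈ Finset.range N,
            ((M - w (V i ω).2 (V j ω).2) /
              (M - (1 / (N : ℝ)) * ∑ j' ∈ Finset.range N, w (V i ω).2 (V j' ω).2)) *
            Real.exp (s (V i ω).1 (V j ω).1)))
      atTop
      (nhds (Real.log (∫ q : (X × Y) × (X × Y),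
        ((M - w q.1.2 q.2.2) / (M - Z q.1.2)) * Real.exp (s q.1.1 q.2.1)
        ∂(ρ.prod ρ)))) :=
  empirical_conditional_uniformity_tendsto_general μ V hV_meas hV_indep hV_ident s hs_meas B hs_bdd
    w M hM Z hZ hZ_lt ρ hρ
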